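/- Interpolation (inductive statement): Let Γ = Γ_s ⋈ Γ_t be a partitioned context. (1) For every normal form t with Γ ⊢ t ⇐ T, there exist a type M and terms l ∈ Tm(Γ_s, M) and r ∈ Tm(Γ_t.(x : M), T) such that Γ ⊢ r[l..] ≡ t : T and for every polarity p ∈ {+,−}, M^p ⊆ Γ_s^p ∩ (Γ_t^{−p} ∪ T^p). (2) For every neutral t with Γ ⊢ t ⇒ T, either (a) T^p ⊆ Γ_s^p for all p, and there exist a type M and terms l ∈ Tm(Γ_t, M) and r ∈ Tm(Γ_s.(x : M), T) with Γ ⊢ r[l..] ≡ t : T and M^p ⊆ Γ_s^{−p} ∩ Γ_t^p for all p; or (b) T^p ⊆ Γ_t^p for all p, and there exist a type M and terms l ∈ Tm(Γ_s, M) and r ∈ Tm(Γ_t.(x : M), T) with Γ ⊢ r[l..] ≡ t : T and M^p ⊆ Γ_s^p ∩ Γ_t^{−p} for all p. -/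

import Mathlib

namespace STLCp

/-- Types of the simply-typed λ-calculus with sums, over base types `B`. -/
inductive Ty (B : Type) : Type
  | base : B → Ty B
  | unit : Ty B
  | empty : Ty B
  | prod : Ty B → Ty B → Ty B
  | sum : Ty B → Ty B → Ty B
  | arr : Ty B → Ty B → Ty B

/-- Terms (de Bruijn style) over a set of constants `C`. -/
inductive Tm (C : Type) : Type
  | cst : C → Tm C
  | var : Nat → Tm C
  | star : Tm C
  | pair : Tm C → Tm C → Tm C
  | proj1 : Tm C → Tm C
  | proj2 : Tm C → Tm C
  | lam : Tm C → Tm C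
  | app : Tm C → Tm C → Tm C
  | inl : Tm C → Tm C
  | inr : Tm C → Tm C
  | raise : Tm C → Tm C
  | case : Tm C → Tm C → Tm C → Tm C

variable {B C : Type}

/-- Lifting a renaming under a binder. -/
def liftRen (ρ : Nat → Nat) : Nat → Nat
  | 0 => 0
  | n + 1 => ρ n + 1

/-- Action of renamings on terms. -/
def rename (ρ : Nat → Nat) : Tm C → Tm C
  | .cst c => .cst c
  | .var n => .var (ρ n)
  | .star => .star
  | .pair t u => .pair (rename ρ t) (rename ρ u)
  | .proj1 t => .proj1 (rename ρ t)
  | .proj2 t => .proj2 (rename ρ t)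
  | .lam t => .lam (rename (liftRen ρ) t)
  | .app t u => .app (rename ρ t) (rename ρ u)
  | .inl t => .inl (rename ρ t)
  | .inr t => .inr (rename ρ t)
  | .raise t => .raise (rename ρ t)
  | .case s bl br => .case (rename ρ s) (rename (liftRen ρ) bl) (rename (liftRen ρ) br)

/-- Lifting a parallel substitution under a binder. -/
def liftSub (σ : Nat → Tm C) : Nat → Tm C
  | 0 => .var 0
  | n + 1 => rename Nat.succ (σ n)

/-- Action of parallel substitutions on terms, `t[σ]`. -/
def subst (σ : Nat → Tm C) : Tm C → Tm C
  | .cst c => .cst c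
  | .var n => σ n
  | .star => .star
  | .pair t u => .pair (subst σ t) (subst σ u)
  | .proj1 t => .proj1 (subst σ t)
  | .proj2 t => .proj2 (subst σ t)
  | .lam t => .lam (subst (liftSub σ) t)
  | .app t u => .app (subst σ t) (subst σ u)
  | .inl t => .inl (subst σ t)
  | .inr t => .inr (subst σ t)
  | .raise t => .raise (subst σ t)
  | .case s bl br => .case (subst σ s) (subst (liftSub σ) bl) (subst (liftSub σ) br)

/-- The substitution `u..`: maps the last variable to `u`, the identity elsewhere. -/
def sub0 (u : Tm C) : Nat → Tm C
  | 0 => u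
  | n + 1 => .var n

/-- Eliminations: application, projections and case analysis. -/
inductive Elim (C : Type) : Type
  | eapp : Tm C → Elim C
  | eproj1 : Elim C
  | eproj2 : Elim C
  | ecase : Tm C → Tm C → Elim C

/-- Plugging a term into an elimination, `e[t]`. -/
def plug : Elim C → Tm C → Tm C
  | .eapp u, t => .app t u
  | .eproj1, t => .proj1 t
  | .eproj2, t => .proj2 t
  | .ecase bl br, t => .case t bl br

/-- Weakening the contents of an elimination (used when pushing it under a binder). -/
def weakenElim : Elim C → Elim C
  | .eapp u => .eapp (rename Nat.succ u)
  | .eproj1 => .eproj1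
  | .eproj2 => .eproj2
  | .ecase bl br => .ecase (rename (liftRen Nat.succ) bl) (rename (liftRen Nat.succ) br)

/-- The β-rules. -/
inductive BetaBase : Tm C → Tm C → Prop
  | proj1 (t u : Tm C) : BetaBase (.proj1 (.pair t u)) t
  | proj2 (t u : Tm C) : BetaBase (.proj2 (.pair t u)) u
  | app (t u : Tm C) : BetaBase (.app (.lam t) u) (subst (sub0 u) t)
  | case_inl (a bl br : Tm C) : BetaBase (.case (.inl a) bl br) (subst (sub0 a) bl)
  | case_inr (b bl br : Tm C) : BetaBase (.case (.inr b) bl br) (subst (sub0 b) br)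

/-- The commuting-conversion rules. -/
inductive CCBase : Tm C → Tm C → Prop
  | raise (e : Elim C) (t : Tm C) : CCBase (plug e (.raise t)) (.raise t)
  | case (e : Elim C) (s bl br : Tm C) :
      CCBase (plug e (.case s bl br))
        (.case s (plug (weakenElim e) bl) (plug (weakenElim e) br))

/-- Congruence closure of a base relation on terms. -/
inductive Cong (R : Tm C → Tm C → Prop) : Tm C → Tm C → Prop
  | base : R t u → Cong R t u
  | pairL : Cong R t t' → Cong R (.pair t u) (.pair t' u)
  | pairR : Cong R u u' → Cong R (.pair t u) (.pair t u')
  | proj1 : Cong R t t' → Cong R (.proj1 t) (.proj1 t')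
  | proj2 : Cong R t t' → Cong R (.proj2 t) (.proj2 t')
  | lam : Cong R t t' → Cong R (.lam t) (.lam t')
  | appL : Cong R t t' → Cong R (.app t u) (.app t' u)
  | appR : Cong R u u' → Cong R (.app t u) (.app t u')
  | inl : Cong R t t' → Cong R (.inl t) (.inl t')
  | inr : Cong R t t' → Cong R (.inr t) (.inr t')
  | raise : Cong R t t' → Cong R (.raise t) (.raise t')
  | caseS : Cong R s s' → Cong R (.case s bl br) (.case s' bl br)
  | caseL : Cong R bl bl' → Cong R (.case s bl br) (.case s bl' br)
  | caseR : Cong R br br' → Cong R (.case s bl br) (.case s bl br')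

/-- One-step β-reduction. -/
def StepBeta : Tm C → Tm C → Prop := Cong BetaBase

/-- One-step commuting-conversion reduction. -/
def StepCC : Tm C → Tm C → Prop := Cong CCBase

/-- One-step reduction (β-rules together with commuting conversions). -/
def Step : Tm C → Tm C → Prop := Cong (fun t u => BetaBase t u ∨ CCBase t u)

/-- Reflexive-transitive closures. -/
def RedsBeta : Tm C → Tm C → Prop := Relation.ReflTransGen StepBeta
def RedsCC : Tm C → Tm C → Prop := Relation.ReflTransGen StepCC
def Reds : Tm C → Tm C → Prop := Relation.ReflTransGen Step

/-- Typing judgment `Γ ⊢ t : A` over a language given by `tyof : C → Ty B`.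
Contexts are lists of types, the head being the last-bound variable. -/
inductive HasType (tyof : C → Ty B) : List (Ty B) → Tm C → Ty B → Prop
  | cst (Γ) (c : C) : HasType tyof Γ (.cst c) (tyof c)
  | var : Γ[n]? = some A → HasType tyof Γ (.var n) A
  | star : HasType tyof Γ .star .unit
  | pair : HasType tyof Γ t A → HasType tyof Γ u A' →
      HasType tyof Γ (.pair t u) (.prod A A')
  | proj1 : HasType tyof Γ p (.prod A A') → HasType tyof Γ (.proj1 p) A
  | proj2 : HasType tyof Γ p (.prod A A') → HasType tyof Γ (.proj2 p) A'
  | lam : HasType tyof (A :: Γ) t A' → HasType tyof Γ (.lam t) (.arr A A')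
  | app : HasType tyof Γ t (.arr A A') → HasType tyof Γ u A →
      HasType tyof Γ (.app t u) A'
  | raise : HasType tyof Γ t .empty → HasType tyof Γ (.raise t) A
  | inl : HasType tyof Γ a A → HasType tyof Γ (.inl a) (.sum A A')
  | inr : HasType tyof Γ b A' → HasType tyof Γ (.inr b) (.sum A A')
  | case : HasType tyof Γ s (.sum A A') → HasType tyof (A :: Γ) bl T →
      HasType tyof (A' :: Γ) br T → HasType tyof Γ (.case s bl br) T

mutual
  /-- Bidirectional checking judgment `Γ ⊢ t ⇐ A` (normal forms). -/
  inductive Check (tyof : C → Ty B) : List (Ty B) → Tm C → Ty B → Prop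
    | star : Check tyof Γ .star .unit
    | pair : Check tyof Γ t A → Check tyof Γ u A' →
        Check tyof Γ (.pair t u) (.prod A A')
    | lam : Check tyof (A :: Γ) t A' → Check tyof Γ (.lam t) (.arr A A')
    | inl : Check tyof Γ a A → Check tyof Γ (.inl a) (.sum A A')
    | inr : Check tyof Γ b A' → Check tyof Γ (.inr b) (.sum A A')
    | demote : Infer tyof Γ t A → A = A' → Check tyof Γ t A'
    | raise : Infer tyof Γ t .empty → Check tyof Γ (.raise t) A
    | case : Infer tyof Γ s (.sum A A') → Check tyof (A :: Γ) bl T →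
        Check tyof (A' :: Γ) br T → Check tyof Γ (.case s bl br) T

  /-- Bidirectional inference judgment `Γ ⊢ t ⇒ A` (neutral forms). -/
  inductive Infer (tyof : C → Ty B) : List (Ty B) → Tm C → Ty B → Prop
    | cst (Γ) (c : C) : Infer tyof Γ (.cst c) (tyof c)
    | var : Γ[n]? = some A → Infer tyof Γ (.var n) A
    | proj1 : Infer tyof Γ p (.prod A A') → Infer tyof Γ (.proj1 p) A
    | proj2 : Infer tyof Γ p (.prod A A') → Infer tyof Γ (.proj2 p) A'
    | app : Infer tyof Γ t (.arr A A') → Check tyof Γ u A →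
        Infer tyof Γ (.app t u) A'
end

/-- The substitution replacing the last variable by `inl` of itself
(used in the η-law for sums). -/
def inlSub : Nat → Tm C
  | 0 => .inl (.var 0)
  | n + 1 => .var (n + 1)

/-- The substitution replacing the last variable by `inr` of itself. -/
def inrSub : Nat → Tm C
  | 0 => .inr (.var 0)
  | n + 1 => .var (n + 1)

/-- Conversion `Γ ⊢ t ≡ u : A`: the least congruent equivalence relation on
well-typed terms containing the β and η laws for all type formers
(the equational theory of bicartesian closed categories). -/
inductive Conv (tyof : C → Ty B) : List (Ty B) → Tm C → Tm C → Ty B → Prop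
  | refl : HasType tyof Γ t A → Conv tyof Γ t t A
  | symm : Conv tyof Γ t u A → Conv tyof Γ u t A
  | trans : Conv tyof Γ t u A → Conv tyof Γ u v A → Conv tyof Γ t v A
  -- congruence
  | pair : Conv tyof Γ t t' A → Conv tyof Γ u u' A' →
      Conv tyof Γ (.pair t u) (.pair t' u') (.prod A A')
  | proj1 : Conv tyof Γ p p' (.prod A A') → Conv tyof Γ (.proj1 p) (.proj1 p') A
  | proj2 : Conv tyof Γ p p' (.prod A A') → Conv tyof Γ (.proj2 p) (.proj2 p') A'
  | lam : Conv tyof (A :: Γ) t t' A' → Conv tyof Γ (.lam t) (.lam t') (.arr A A')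
  | app : Conv tyof Γ t t' (.arr A A') → Conv tyof Γ u u' A →
      Conv tyof Γ (.app t u) (.app t' u') A'
  | inl : Conv tyof Γ a a' A → Conv tyof Γ (.inl a) (.inl a') (.sum A A')
  | inr : Conv tyof Γ b b' A' → Conv tyof Γ (.inr b) (.inr b') (.sum A A')
  | raise : Conv tyof Γ t t' .empty → Conv tyof Γ (.raise t) (.raise t') A
  | case : Conv tyof Γ s s' (.sum A A') → Conv tyof (A :: Γ) bl bl' T →
      Conv tyof (A' :: Γ) br br' T →
      Conv tyof Γ (.case s bl br) (.case s' bl' br') T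
  -- β laws
  | beta_proj1 : HasType tyof Γ t A → HasType tyof Γ u A' →
      Conv tyof Γ (.proj1 (.pair t u)) t A
  | beta_proj2 : HasType tyof Γ t A → HasType tyof Γ u A' →
      Conv tyof Γ (.proj2 (.pair t u)) u A'
  | beta_app : HasType tyof (A :: Γ) t A' → HasType tyof Γ u A →
      Conv tyof Γ (.app (.lam t) u) (subst (sub0 u) t) A'
  | beta_inl : HasType tyof Γ a A → HasType tyof (A :: Γ) bl T →
      HasType tyof (A' :: Γ) br T →
      Conv tyof Γ (.case (.inl a) bl br) (subst (sub0 a) bl) T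
  | beta_inr : HasType tyof Γ b A' → HasType tyof (A :: Γ) bl T →
      HasType tyof (A' :: Γ) br T →
      Conv tyof Γ (.case (.inr b) bl br) (subst (sub0 b) br) T
  -- η laws
  | eta_unit : HasType tyof Γ t .unit → Conv tyof Γ t .star .unit
  | eta_prod : HasType tyof Γ t (.prod A A') →
      Conv tyof Γ t (.pair (.proj1 t) (.proj2 t)) (.prod A A')
  | eta_arr : HasType tyof Γ t (.arr A A') →
      Conv tyof Γ t (.lam (.app (rename Nat.succ t) (.var 0))) (.arr A A')
  | eta_empty : HasType tyof Γ s .empty → HasType tyof Γ u T →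
      Conv tyof Γ u (.raise s) T
  | eta_sum : HasType tyof Γ s (.sum A A') → HasType tyof (.sum A A' :: Γ) u T →
      Conv tyof Γ (subst (sub0 s) u)
        (.case s (subst inlSub u) (subst inrSub u)) T

/-- `t` is covered by the predicate `F`: `t` is a case tree whose nodes are
eliminations of neutrals at positive types and whose leaves satisfy `F`
(in suitably extended contexts). -/
inductive Covered (tyof : C → Ty B) (F : List (Ty B) → Tm C → Prop) :
    List (Ty B) → Tm C → Prop
  | leaf : F Γ t → Covered tyof F Γ t
  | raise : Infer tyof Γ n .empty → Covered tyof F Γ (.raise n)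
  | case : Infer tyof Γ n (.sum A A') → Covered tyof F (A :: Γ) bl →
      Covered tyof F (A' :: Γ) br → Covered tyof F Γ (.case n bl br)

/-- `ρ` is a (typed) renaming from `Δ` to `Γ`. -/
def IsRen (ρ : Nat → Nat) (Δ Γ : List (Ty B)) : Prop :=
  ∀ n A, Γ[n]? = some A → Δ[ρ n]? = some A

/-- Values at a type, defined by induction on the type (logical relation). -/
def Value (tyof : C → Ty B) : Ty B → List (Ty B) → Tm C → Prop
  | .base b => Covered tyof (fun Δ u => Infer tyof Δ u (.base b))
  | .empty => Covered tyof (fun Δ u => Infer tyof Δ u .empty)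
  | .sum A A' => Covered tyof (fun Δ u =>
      Infer tyof Δ u (.sum A A') ∨
      (∃ a, u = .inl a ∧ Value tyof A Δ a) ∨
      (∃ b, u = .inr b ∧ Value tyof A' Δ b))
  | .unit => fun Γ t => Check tyof Γ t .unit
  | .prod A A' => fun Γ t => Check tyof Γ t (.prod A A') ∧
      (∃ v, Reds (.proj1 t) v ∧ Value tyof A Γ v) ∧
      (∃ v, Reds (.proj2 t) v ∧ Value tyof A' Γ v)
  | .arr A A' => fun Γ t => Check tyof Γ t (.arr A A') ∧
      ∀ Δ ρ, IsRen ρ Δ Γ → ∀ u, Value tyof A Δ u →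
        ∃ v, Reds (.app (rename ρ t) u) v ∧ Value tyof A' Δ v

/-- `t` is reducible at `T` in `Γ`: it reduces to a value at `T`. -/
def Reducible (tyof : C → Ty B) (T : Ty B) (Γ : List (Ty B)) (t : Tm C) : Prop :=
  ∃ v, Reds t v ∧ Value tyof T Γ v

/-- Polarised vocabulary of a type: `voc true A = A⁺`, `voc false A = A⁻`. -/
def voc (p : Bool) : Ty B → Set B
  | .base b => if p then {b} else ∅
  | .unit => ∅
  | .empty => ∅
  | .prod A A' => voc p A ∪ voc p A'
  | .sum A A' => voc p A ∪ voc p A'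
  | .arr A A' => voc (!p) A ∪ voc p A'

/-- Polarised vocabulary of a context. -/
def vocCtx (p : Bool) (Γ : List (Ty B)) : Set B :=
  {b | ∃ A ∈ Γ, b ∈ voc p A}

/-- Context partitions `Γ = Γs ⋈ Γt`. -/
inductive Splits {B : Type} : List (Ty B) → List (Ty B) → List (Ty B) → Type
  | nil : Splits [] [] []
  | left (A : Ty B) : Splits Γ Γs Γt → Splits (A :: Γ) (A :: Γs) Γt
  | right (A : Ty B) : Splits Γ Γs Γt → Splits (A :: Γ) Γs (A :: Γt)

/-- The renaming embedding `Γs` into `Γ` induced by a partition. -/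
def Splits.renS {B : Type} : {Γ Γs Γt : List (Ty B)} → Splits Γ Γs Γt → Nat → Nat
  | _, _, _, .nil => id
  | _, _, _, .left _ s => fun n => match n with | 0 => 0 | m + 1 => s.renS m + 1
  | _, _, _, .right _ s => fun n => s.renS n + 1

/-- The renaming embedding `Γt` into `Γ` induced by a partition. -/
def Splits.renT {B : Type} : {Γ Γs Γt : List (Ty B)} → Splits Γ Γs Γt → Nat → Nat
  | _, _, _, .nil => id
  | _, _, _, .left _ s => fun n => s.renT n + 1
  | _, _, _, .right _ s => fun n => match n with | 0 => 0 | m + 1 => s.renT m + 1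

/-- The composite `r[l..]` where `l` lives in one part of the context
(embedded via `ρl`) and the tail variables of `r` live in the other part
(embedded via `ρr`); the result lives in the full context. -/
def splice (ρl ρr : Nat → Nat) (l r : Tm C) : Tm C :=
  subst (fun n => match n with
    | 0 => rename ρl l
    | m + 1 => .var (ρr m)) r

/-- The (empty) constant-typing function for a language without constants. -/
def noCst {B : Type} : Empty → Ty B := fun c => c.elim

/-- The set of constants occurring in a term. -/
def constsOf : Tm C → Set C
  | .cst c => {c}
  | .var _ => ∅
  | .star => ∅
  | .pair t u => constsOf t ∪ constsOf u
  | .proj1 t => constsOf t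
  | .proj2 t => constsOf t
  | .lam t => constsOf t
  | .app t u => constsOf t ∪ constsOf u
  | .inl t => constsOf t
  | .inr t => constsOf t
  | .raise t => constsOf t
  | .case s bl br => constsOf s ∪ constsOf bl ∪ constsOf br

/-!
By simultaneous induction on `Γ ⊢ t ⇐ T` and `Γ ⊢ t ⇒ T`, for all partitions at once.
Interpolants of several premises are combined into their product, the right-hand term projecting
out the component it needs. A neutral whose interpolant goes from `Γt` to `Γs` becomes a normal
form with interpolant `M → T`. For `case` on a neutral of type `A + A'` coming from `Γs`, the
branches are interpolated with `A` and `A'` on the `Γs`-side, and the interpolant `M0 → M1 + M2`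
carries the choice of branch across the partition; the resulting term is convertible to the
original one by β-laws and the case-of-case conversion, which follows from the η-law for sums.
-/

section Substitution

def scons (u : Tm C) (σ : Nat → Tm C) : Nat → Tm C
  | 0 => u
  | n + 1 => σ n

theorem liftRen_comp (ρ ρ' : Nat → Nat) : liftRen ρ ∘ liftRen ρ' = liftRen (ρ ∘ ρ') := by
  funext n; cases n <;> rfl

theorem rename_rename (ρ ρ' : Nat → Nat) (t : Tm C) :
    rename ρ (rename ρ' t) = rename (ρ ∘ ρ') t := by
  induction t generalizing ρ ρ' <;> simp [rename, liftRen_comp, *]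

theorem liftSub_comp_liftRen (σ : Nat → Tm C) (ρ : Nat → Nat) :
    liftSub σ ∘ liftRen ρ = liftSub (σ ∘ ρ) := by
  funext n; cases n <;> rfl

theorem subst_rename (σ : Nat → Tm C) (ρ : Nat → Nat) (t : Tm C) :
    subst σ (rename ρ t) = subst (σ ∘ ρ) t := by
  induction t generalizing σ ρ <;> simp [rename, subst, liftSub_comp_liftRen, *]

theorem rename_comp_liftSub (ρ : Nat → Nat) (σ : Nat → Tm C) :
    rename (liftRen ρ) ∘ liftSub σ = liftSub (rename ρ ∘ σ) := by
  funext n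
  cases n with
  | zero => rfl
  | succ n => simp only [Function.comp, liftSub, rename_rename]; rfl

theorem rename_subst (ρ : Nat → Nat) (σ : Nat → Tm C) (t : Tm C) :
    rename ρ (subst σ t) = subst (rename ρ ∘ σ) t := by
  induction t generalizing ρ σ <;> simp [rename, subst, rename_comp_liftSub, *]

theorem subst_comp_liftSub (σ τ : Nat → Tm C) :
    subst (liftSub σ) ∘ liftSub τ = liftSub (subst σ ∘ τ) := by
  funext n
  cases n with
  | zero => rfl
  | succ n => simp only [Function.comp, liftSub, subst_rename, rename_subst]; rfl

theorem subst_subst (σ τ : Nat → Tm C) (t : Tm C) :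
    subst σ (subst τ t) = subst (subst σ ∘ τ) t := by
  induction t generalizing σ τ <;> simp [subst, subst_comp_liftSub, *]

theorem liftSub_var_comp (ρ : Nat → Nat) :
    liftSub (Tm.var ∘ ρ : Nat → Tm C) = Tm.var ∘ liftRen ρ := by
  funext n; cases n <;> rfl

theorem rename_eq_subst (ρ : Nat → Nat) (t : Tm C) :
    rename ρ t = subst (Tm.var ∘ ρ) t := by
  induction t generalizing ρ <;> simp [rename, subst, liftSub_var_comp, *]

theorem subst_var (t : Tm C) : subst Tm.var t = t := by
  have h : rename id t = t := by
    induction t <;> simp_all [rename, show liftRen id = id from funext fun n => by cases n <;> rfl]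
  exact (rename_eq_subst id t).symm.trans h

theorem subst_comp_scons (σ : Nat → Tm C) (u : Tm C) (τ : Nat → Tm C) :
    subst σ ∘ scons u τ = scons (subst σ u) (subst σ ∘ τ) := by
  funext n; cases n <;> rfl

end Substitution

section Typing

variable {tyof : C → Ty B}

theorem IsRen.lift {ρ : Nat → Nat} {Δ Γ : List (Ty B)} (h : IsRen ρ Δ Γ) (A : Ty B) :
    IsRen (liftRen ρ) (A :: Δ) (A :: Γ) := by
  rintro (_ | n) T hn
  · simpa [liftRen] using hn
  · simpa [liftRen] using h n T hn

theorem IsRen.succ (Δ : List (Ty B)) (A : Ty B) : IsRen Nat.succ (A :: Δ) Δ :=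
  fun _ _ hn => hn

theorem HasType.renaming {Γ : List (Ty B)} {t : Tm C} {A : Ty B} (h : HasType tyof Γ t A)
    {Δ : List (Ty B)} {ρ : Nat → Nat} (hρ : IsRen ρ Δ Γ) :
    HasType tyof Δ (rename ρ t) A := by
  induction h generalizing Δ ρ with
  | cst Γ c => exact .cst _ c
  | var hn => exact .var (hρ _ _ hn)
  | star => exact .star
  | pair _ _ iht ihu => exact .pair (iht hρ) (ihu hρ)
  | proj1 _ ih => exact .proj1 (ih hρ)
  | proj2 _ ih => exact .proj2 (ih hρ)
  | lam _ ih => exact .lam (ih (hρ.lift _))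
  | app _ _ iht ihu => exact .app (iht hρ) (ihu hρ)
  | raise _ ih => exact .raise (ih hρ)
  | inl _ ih => exact .inl (ih hρ)
  | inr _ ih => exact .inr (ih hρ)
  | case _ _ _ ihs ihl ihr => exact .case (ihs hρ) (ihl (hρ.lift _)) (ihr (hρ.lift _))

theorem HasType.weaken {Γ : List (Ty B)} {t : Tm C} {A : Ty B} (h : HasType tyof Γ t A)
    (X : Ty B) : HasType tyof (X :: Γ) (rename Nat.succ t) A :=
  h.renaming (IsRen.succ Γ X)

theorem HasType.weaken_lift {Γ : List (Ty B)} {t : Tm C} {X A : Ty B}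
    (h : HasType tyof (X :: Γ) t A) (Y : Ty B) :
    HasType tyof (X :: Y :: Γ) (rename (liftRen Nat.succ) t) A :=
  h.renaming ((IsRen.succ Γ Y).lift X)

def IsSub (tyof : C → Ty B) (σ : Nat → Tm C) (Δ Γ : List (Ty B)) : Prop :=
  ∀ n A, Γ[n]? = some A → HasType tyof Δ (σ n) A

theorem IsRen.isSub {ρ : Nat → Nat} {Δ Γ : List (Ty B)} (h : IsRen ρ Δ Γ) :
    IsSub tyof (Tm.var ∘ ρ) Δ Γ :=
  fun n A hn => .var (h n A hn)

theorem IsSub.scons {σ : Nat → Tm C} {Δ Γ : List (Ty B)} (h : IsSub tyof σ Δ Γ)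
    {u : Tm C} {A : Ty B} (hu : HasType tyof Δ u A) :
    IsSub tyof (STLCp.scons u σ) Δ (A :: Γ) := by
  rintro (_ | n) T hn
  · exact Option.some_injective _ hn ▸ hu
  · exact h n T hn

theorem IsSub.lift {σ : Nat → Tm C} {Δ Γ : List (Ty B)} (h : IsSub tyof σ Δ Γ) (A : Ty B) :
    IsSub tyof (liftSub σ) (A :: Δ) (A :: Γ) := by
  rintro (_ | n) T hn
  · exact .var hn
  · exact (h n T hn).weaken A

theorem HasType.substitution {Γ : List (Ty B)} {t : Tm C} {A : Ty B} (h : HasType tyof Γ t A)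
    {Δ : List (Ty B)} {σ : Nat → Tm C} (hσ : IsSub tyof σ Δ Γ) :
    HasType tyof Δ (subst σ t) A := by
  induction h generalizing Δ σ with
  | cst Γ c => exact .cst _ c
  | var hn => exact hσ _ _ hn
  | star => exact .star
  | pair _ _ iht ihu => exact .pair (iht hσ) (ihu hσ)
  | proj1 _ ih => exact .proj1 (ih hσ)
  | proj2 _ ih => exact .proj2 (ih hσ)
  | lam _ ih => exact .lam (ih (hσ.lift _))
  | app _ _ iht ihu => exact .app (iht hσ) (ihu hσ)
  | raise _ ih => exact .raise (ih hσ)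
  | inl _ ih => exact .inl (ih hσ)
  | inr _ ih => exact .inr (ih hσ)
  | case _ _ _ ihs ihl ihr => exact .case (ihs hσ) (ihl (hσ.lift _)) (ihr (hσ.lift _))

end Typing

section Conversion

variable {tyof : C → Ty B}

theorem rename_subst_comm {ρ ρ' : Nat → Nat} {σ σ' : Nat → Tm C}
    (h : rename ρ' ∘ σ = σ' ∘ ρ) (t : Tm C) :
    rename ρ' (subst σ t) = subst σ' (rename ρ t) := by
  rw [rename_subst, subst_rename, h]

theorem rename_sub0 (ρ : Nat → Nat) (u t : Tm C) :
    rename ρ (subst (sub0 u) t) = subst (sub0 (rename ρ u)) (rename (liftRen ρ) t) :=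
  rename_subst_comm (funext fun n => by cases n <;> rfl) t

theorem Conv.renaming {Γ : List (Ty B)} {t u : Tm C} {A : Ty B} (h : Conv tyof Γ t u A)
    {Δ : List (Ty B)} {ρ : Nat → Nat} (hρ : IsRen ρ Δ Γ) :
    Conv tyof Δ (rename ρ t) (rename ρ u) A := by
  induction h generalizing Δ ρ with
  | refl h => exact .refl (h.renaming hρ)
  | symm _ ih => exact .symm (ih hρ)
  | trans _ _ ih ih' => exact .trans (ih hρ) (ih' hρ)
  | pair _ _ ih ih' => exact .pair (ih hρ) (ih' hρ)
  | proj1 _ ih => exact .proj1 (ih hρ)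
  | proj2 _ ih => exact .proj2 (ih hρ)
  | lam _ ih => exact .lam (ih (hρ.lift _))
  | app _ _ ih ih' => exact .app (ih hρ) (ih' hρ)
  | inl _ ih => exact .inl (ih hρ)
  | inr _ ih => exact .inr (ih hρ)
  | raise _ ih => exact .raise (ih hρ)
  | case _ _ _ ihs ihl ihr => exact .case (ihs hρ) (ihl (hρ.lift _)) (ihr (hρ.lift _))
  | beta_proj1 h h' => exact .beta_proj1 (h.renaming hρ) (h'.renaming hρ)
  | beta_proj2 h h' => exact .beta_proj2 (h.renaming hρ) (h'.renaming hρ)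
  | beta_app h h' =>
      rw [rename_sub0]; exact .beta_app (h.renaming (hρ.lift _)) (h'.renaming hρ)
  | beta_inl h hl hr =>
      rw [rename_sub0]
      exact .beta_inl (h.renaming hρ) (hl.renaming (hρ.lift _)) (hr.renaming (hρ.lift _))
  | beta_inr h hl hr =>
      rw [rename_sub0]
      exact .beta_inr (h.renaming hρ) (hl.renaming (hρ.lift _)) (hr.renaming (hρ.lift _))
  | eta_unit h => exact .eta_unit (h.renaming hρ)
  | eta_prod h => exact .eta_prod (h.renaming hρ)
  | @eta_arr _ t _ _ h =>
      have hweak : rename (liftRen ρ) (rename Nat.succ t) = rename Nat.succ (rename ρ t) := by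
        simp only [rename_rename]; rfl
      simpa only [rename, hweak, liftRen] using Conv.eta_arr (h.renaming hρ)
  | eta_empty h h' => exact .eta_empty (h.renaming hρ) (h'.renaming hρ)
  | @eta_sum _ _ _ _ u _ h hu =>
      have hinl := rename_subst_comm (ρ := liftRen ρ) (ρ' := liftRen ρ) (σ := inlSub)
        (σ' := inlSub) (funext fun n => by cases n <;> rfl) u
      have hinr := rename_subst_comm (ρ := liftRen ρ) (ρ' := liftRen ρ) (σ := inrSub)
        (σ' := inrSub) (funext fun n => by cases n <;> rfl) u
      rw [rename_sub0]
      simpa only [rename, hinl, hinr] using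
        Conv.eta_sum (h.renaming hρ) (hu.renaming (hρ.lift _))

theorem HasType.conv_substitution {Γ : List (Ty B)} {t : Tm C} {A : Ty B} (h : HasType tyof Γ t A)
    {Δ : List (Ty B)} {σ τ : Nat → Tm C}
    (hστ : ∀ n T, Γ[n]? = some T → Conv tyof Δ (σ n) (τ n) T) :
    Conv tyof Δ (subst σ t) (subst τ t) A := by
  induction h generalizing Δ σ τ with
  | cst Γ c => exact .refl (.cst _ c)
  | var hn => exact hστ _ _ hn
  | star => exact .refl .star
  | pair _ _ iht ihu => exact .pair (iht hστ) (ihu hστ)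
  | proj1 _ ih => exact .proj1 (ih hστ)
  | proj2 _ ih => exact .proj2 (ih hστ)
  | lam _ ih => exact .lam (ih (lift hστ))
  | app _ _ iht ihu => exact .app (iht hστ) (ihu hστ)
  | raise _ ih => exact .raise (ih hστ)
  | inl _ ih => exact .inl (ih hστ)
  | inr _ ih => exact .inr (ih hστ)
  | case _ _ _ ihs ihl ihr => exact .case (ihs hστ) (ihl (lift hστ)) (ihr (lift hστ))
where
  lift {Γ Δ : List (Ty B)} {σ τ : Nat → Tm C} {X : Ty B}
      (hστ : ∀ n T, Γ[n]? = some T → Conv tyof Δ (σ n) (τ n) T) :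
      ∀ n T, (X :: Γ)[n]? = some T → Conv tyof (X :: Δ) (liftSub σ n) (liftSub τ n) T
    | 0, _, hn => .refl (.var hn)
    | n + 1, T, hn => (hστ n T hn).renaming (IsRen.succ Δ X)

theorem subst_rename_eq_self {σ : Nat → Tm C} {ρ : Nat → Nat} (h : σ ∘ ρ = Tm.var)
    (t : Tm C) : subst σ (rename ρ t) = t := by
  rw [subst_rename, h, subst_var]

theorem subst_rename_eq_rename {σ : Nat → Tm C} {ρ : Nat → Nat} (h : σ ∘ ρ = Tm.var ∘ ρ)
    (t : Tm C) : subst σ (rename ρ t) = rename ρ t := by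
  rw [subst_rename, h, rename_eq_subst]

/-- Not one of the rules of `Conv`: derived from the η-law for sums. -/
theorem Conv.case_case {Γ : List (Ty B)} {n c1 c2 d1 d2 : Tm C} {A A' M1 M2 T : Ty B}
    (hn : HasType tyof Γ n (.sum A A'))
    (hc1 : HasType tyof (A :: Γ) c1 (.sum M1 M2)) (hc2 : HasType tyof (A' :: Γ) c2 (.sum M1 M2))
    (hd1 : HasType tyof (M1 :: Γ) d1 T) (hd2 : HasType tyof (M2 :: Γ) d2 T) :
    Conv tyof Γ (.case (.case n c1 c2) d1 d2)
      (.case n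
        (.case c1 (rename (liftRen Nat.succ) d1) (rename (liftRen Nat.succ) d2))
        (.case c2 (rename (liftRen Nat.succ) d1) (rename (liftRen Nat.succ) d2))) T := by
  -- `u` is the left-hand side with the scrutinee `n` abstracted; η-expand it at `n`.
  set u : Tm C := .case
    (.case (.var 0) (rename (liftRen Nat.succ) c1) (rename (liftRen Nat.succ) c2))
    (rename (liftRen Nat.succ) d1) (rename (liftRen Nat.succ) d2)
  have hu : HasType tyof (.sum A A' :: Γ) u T :=
    .case (.case (.var rfl) (hc1.weaken_lift _) (hc2.weaken_lift _)) (hd1.weaken_lift _)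
      (hd2.weaken_lift _)
  have cancel {σ : Nat → Tm C} (hσ : σ ∘ Nat.succ = Tm.var) (x : Tm C) :
      subst (liftSub σ) (rename (liftRen Nat.succ) x) = x :=
    subst_rename_eq_self (by rw [liftSub_comp_liftRen, hσ]; funext k; cases k <;> rfl) x
  have keep {σ : Nat → Tm C} (hσ : σ ∘ Nat.succ = Tm.var ∘ Nat.succ) (x : Tm C) :
      subst (liftSub σ) (rename (liftRen Nat.succ) x) = rename (liftRen Nat.succ) x :=
    subst_rename_eq_rename (by rw [liftSub_comp_liftRen, hσ, liftSub_var_comp]) x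
  have cancel0 (x : Tm C) : subst (sub0 (.var 0)) (rename (liftRen Nat.succ) x) = x :=
    subst_rename_eq_self (funext fun k => by cases k <;> rfl) x
  have hη := Conv.eta_sum hn hu
  simp only [u, subst, cancel (σ := sub0 n) rfl, keep (σ := inlSub) rfl,
    keep (σ := inrSub) rfl, sub0, inlSub, inrSub] at hη
  refine hη.trans (.case (.refl hn)
    (.case ?_ (.refl (hd1.weaken_lift _)) (.refl (hd2.weaken_lift _)))
    (.case ?_ (.refl (hd1.weaken_lift _)) (.refl (hd2.weaken_lift _))))
  · simpa only [cancel0] using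
      Conv.beta_inl (.var (Γ := A :: Γ) (n := 0) rfl) (hc1.weaken_lift _) (hc2.weaken_lift _)
  · simpa only [cancel0] using
      Conv.beta_inr (.var (Γ := A' :: Γ) (n := 0) rfl) (hc1.weaken_lift _) (hc2.weaken_lift _)

theorem Conv.case_case_inl_inr {Γ : List (Ty B)} {S a1 a2 N1 N2 : Tm C} {A A' M1 M2 T : Ty B}
    (hS : HasType tyof Γ S (.sum A A'))
    (ha1 : HasType tyof (A :: Γ) a1 M1) (ha2 : HasType tyof (A' :: Γ) a2 M2)
    (hN1 : HasType tyof (M1 :: Γ) N1 T) (hN2 : HasType tyof (M2 :: Γ) N2 T) :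
    Conv tyof Γ (.case (.case S (.inl a1) (.inr a2)) N1 N2)
      (.case S (subst (sub0 a1) (rename (liftRen Nat.succ) N1))
        (subst (sub0 a2) (rename (liftRen Nat.succ) N2))) T :=
  (Conv.case_case hS (.inl ha1) (.inr ha2) hN1 hN2).trans <| .case (.refl hS)
    (.beta_inl ha1 (hN1.weaken_lift _) (hN2.weaken_lift _))
    (.beta_inr ha2 (hN1.weaken_lift _) (hN2.weaken_lift _))

end Conversion

def Splits.flip {Γ Γs Γt : List (Ty B)} : Splits Γ Γs Γt → Splits Γ Γt Γs
  | .nil => .nil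
  | .left A s => .right A s.flip
  | .right A s => .left A s.flip

section Splits

variable {Γ Γs Γt : List (Ty B)}

theorem Splits.isRen_renS (s : Splits Γ Γs Γt) : IsRen s.renS Γ Γs := by
  induction s with
  | nil => intro n A hn; simp at hn
  | left A s ih => rintro (_ | n) T hn; exacts [hn, ih n T hn]
  | right A s ih => exact fun n T hn => ih n T hn

theorem Splits.isRen_renT (s : Splits Γ Γs Γt) : IsRen s.renT Γ Γt := by
  induction s with
  | nil => intro n A hn; simp at hn
  | left A s ih => exact fun n T hn => ih n T hn
  | right A s ih => rintro (_ | n) T hn; exacts [hn, ih n T hn]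

theorem Splits.var_cases (s : Splits Γ Γs Γt) {n : Nat} {A : Ty B} (h : Γ[n]? = some A) :
    (∃ m, Γs[m]? = some A ∧ s.renS m = n) ∨ (∃ m, Γt[m]? = some A ∧ s.renT m = n) := by
  induction s generalizing n with
  | nil => simp at h
  | left A' s ih =>
      rcases n with _ | n
      · exact .inl ⟨0, h, rfl⟩
      · rcases ih h with ⟨m, hm, rfl⟩ | ⟨m, hm, rfl⟩
        exacts [.inl ⟨m + 1, hm, rfl⟩, .inr ⟨m, hm, rfl⟩]
  | right A' s ih =>
      rcases n with _ | n
      · exact .inr ⟨0, h, rfl⟩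
      · rcases ih h with ⟨m, hm, rfl⟩ | ⟨m, hm, rfl⟩
        exacts [.inl ⟨m, hm, rfl⟩, .inr ⟨m + 1, hm, rfl⟩]

theorem Splits.renS_left (s : Splits Γ Γs Γt) (A : Ty B) : (s.left A).renS = liftRen s.renS := by
  funext n; cases n <;> rfl

theorem Splits.renT_left (s : Splits Γ Γs Γt) (A : Ty B) :
    (s.left A).renT = Nat.succ ∘ s.renT := rfl

theorem Splits.renS_right (s : Splits Γ Γs Γt) (A : Ty B) :
    (s.right A).renS = Nat.succ ∘ s.renS := rfl

theorem Splits.renT_right (s : Splits Γ Γs Γt) (A : Ty B) : (s.right A).renT = liftRen s.renT := by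
  funext n; cases n <;> rfl

theorem Splits.renS_flip (s : Splits Γ Γs Γt) : s.flip.renS = s.renT := by
  induction s with
  | nil => rfl
  | left A s ih => simp only [flip, renS_right, renT_left, ih]
  | right A s ih => simp only [flip, renS_left, renT_right, ih]

theorem Splits.renT_flip (s : Splits Γ Γs Γt) : s.flip.renT = s.renS := by
  induction s with
  | nil => rfl
  | left A s ih => simp only [flip, renT_right, renS_left, ih]
  | right A s ih => simp only [flip, renT_left, renS_right, ih]

end Splits

theorem vocCtx_cons (p : Bool) (A : Ty B) (Γ : List (Ty B)) :
    vocCtx p (A :: Γ) = voc p A ∪ vocCtx p Γ := by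
  ext b; simp [vocCtx]

theorem voc_subset_vocCtx {Γ : List (Ty B)} {n : Nat} {A : Ty B} (h : Γ[n]? = some A)
    (p : Bool) : voc p A ⊆ vocCtx p Γ :=
  fun _ hb => ⟨A, List.mem_of_getElem? h, hb⟩

section Splice

variable {tyof : C → Ty B} {ρl ρr : Nat → Nat}

theorem splice_eq_subst (ρl ρr : Nat → Nat) (l r : Tm C) :
    splice ρl ρr l r = subst (scons (rename ρl l) (Tm.var ∘ ρr)) r := rfl

theorem hasType_splice {Γ Γl Γr : List (Ty B)} {l r : Tm C} {M T : Ty B}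
    (hρl : IsRen ρl Γ Γl) (hρr : IsRen ρr Γ Γr)
    (hl : HasType tyof Γl l M) (hr : HasType tyof (M :: Γr) r T) :
    HasType tyof Γ (splice ρl ρr l r) T :=
  hr.substitution (hρr.isSub.scons (hl.renaming hρl))

theorem splice_rename_succ (ρl ρr : Nat → Nat) (l x : Tm C) :
    splice ρl ρr l (rename Nat.succ x) = rename ρr x := by
  rw [splice_eq_subst, subst_rename, rename_eq_subst ρr]; rfl

theorem splice_eq_subst_sub0 (ρl ρr : Nat → Nat) (l r : Tm C) :
    splice ρl ρr l r = subst (sub0 (rename ρl l)) (rename (liftRen ρr) r) := by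
  rw [splice_eq_subst, subst_rename]
  congr 1; funext n; cases n <;> rfl

def swap01 : Nat → Nat
  | 0 => 1
  | 1 => 0
  | n + 2 => n + 2

theorem IsRen.swap01 (Γ : List (Ty B)) (A A' : Ty B) :
    IsRen swap01 (A :: A' :: Γ) (A' :: A :: Γ) := by
  rintro (_ | _ | n) T hn <;> exact hn

theorem subst_liftSub_splice_swap01 (ρl ρr : Nat → Nat) (l r : Tm C) :
    subst (liftSub (scons (rename ρl l) (Tm.var ∘ ρr))) (rename swap01 r)
      = splice (Nat.succ ∘ ρl) (liftRen ρr) l r := by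
  rw [subst_rename, splice_eq_subst]
  congr 1; funext n
  match n with
  | 0 => exact rename_rename _ _ l
  | 1 => rfl
  | _ + 2 => rfl

theorem splice_lam_swap01 (ρl ρr : Nat → Nat) (l r : Tm C) :
    splice ρl ρr l (.lam (rename swap01 r)) = .lam (splice (Nat.succ ∘ ρl) (liftRen ρr) l r) :=
  congrArg Tm.lam (subst_liftSub_splice_swap01 ρl ρr l r)

theorem splice_case_swap01 (ρl ρr : Nat → Nat) (l a b c : Tm C) :
    splice ρl ρr l (.case a (rename swap01 b) (rename swap01 c))
      = .case (splice ρl ρr l a) (splice (Nat.succ ∘ ρl) (liftRen ρr) l b)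
          (splice (Nat.succ ∘ ρl) (liftRen ρr) l c) := by
  simp only [splice_eq_subst ρl, subst, ← subst_liftSub_splice_swap01]

theorem splice_case_weaken (ρl ρr : Nat → Nat) (l a b c : Tm C) :
    splice ρl ρr l (.case a (rename (liftRen Nat.succ) b) (rename (liftRen Nat.succ) c))
      = .case (splice ρl ρr l a) (rename (liftRen ρr) b) (rename (liftRen ρr) c) := by
  have weaken (x : Tm C) : subst (liftSub (scons (rename ρl l) (Tm.var ∘ ρr)))
      (rename (liftRen Nat.succ) x) = rename (liftRen ρr) x := by
    rw [subst_rename, liftSub_comp_liftRen, rename_eq_subst (liftRen ρr), ← liftSub_var_comp]; rfl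
  simp only [splice_eq_subst ρl, subst, weaken]

theorem splice_app_var_zero (ρl ρr : Nat → Nat) (l x : Tm C) :
    splice ρl ρr l (.app (.var 0) (rename Nat.succ x)) = .app (rename ρl l) (rename ρr x) :=
  congrArg (Tm.app _) (splice_rename_succ ρl ρr l x)

/-- Replaces the last variable of `r` by `k`, which lives in the same context as `r`
(whereas `subst (sub0 k) r` removes that variable). -/
def substHead (k r : Tm C) : Tm C := subst (scons k (Tm.var ∘ Nat.succ)) r

theorem hasType_substHead {Γ : List (Ty B)} {k r : Tm C} {M M' T : Ty B}
    (hk : HasType tyof (M' :: Γ) k M) (hr : HasType tyof (M :: Γ) r T) :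
    HasType tyof (M' :: Γ) (substHead k r) T :=
  hr.substitution ((IsRen.succ Γ M').isSub.scons hk)

theorem splice_substHead (ρl ρr : Nat → Nat) (l k r : Tm C) :
    splice ρl ρr l (substHead k r) = subst (scons (splice ρl ρr l k) (Tm.var ∘ ρr)) r := by
  rw [substHead, splice_eq_subst, subst_subst, subst_comp_scons]; rfl

theorem conv_splice_substHead {Γ Γr : List (Ty B)} {l l' k r : Tm C} {M T : Ty B}
    (hρr : IsRen ρr Γ Γr) (hr : HasType tyof (M :: Γr) r T)
    (hk : Conv tyof Γ (splice ρl ρr l k) (rename ρl l') M) :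
    Conv tyof Γ (splice ρl ρr l (substHead k r)) (splice ρl ρr l' r) T := by
  rw [splice_substHead, splice_eq_subst]
  refine hr.conv_substitution ?_
  rintro (_ | n) X hn
  · exact Option.some_injective _ hn ▸ hk
  · exact .refl (.var (hρr n X hn))

theorem conv_splice_pair_fst {Γ Γl Γr : List (Ty B)} {l1 l2 r : Tm C} {M1 M2 T : Ty B}
    (hρl : IsRen ρl Γ Γl) (hρr : IsRen ρr Γ Γr)
    (hl1 : HasType tyof Γl l1 M1) (hl2 : HasType tyof Γl l2 M2)
    (hr : HasType tyof (M1 :: Γr) r T) :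
    Conv tyof Γ (splice ρl ρr (.pair l1 l2) (substHead (.proj1 (.var 0)) r))
      (splice ρl ρr l1 r) T :=
  conv_splice_substHead hρr hr (.beta_proj1 (hl1.renaming hρl) (hl2.renaming hρl))

theorem conv_splice_pair_snd {Γ Γl Γr : List (Ty B)} {l1 l2 r : Tm C} {M1 M2 T : Ty B}
    (hρl : IsRen ρl Γ Γl) (hρr : IsRen ρr Γ Γr)
    (hl1 : HasType tyof Γl l1 M1) (hl2 : HasType tyof Γl l2 M2)
    (hr : HasType tyof (M2 :: Γr) r T) :
    Conv tyof Γ (splice ρl ρr (.pair l1 l2) (substHead (.proj2 (.var 0)) r))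
      (splice ρl ρr l2 r) T :=
  conv_splice_substHead hρr hr (.beta_proj2 (hl1.renaming hρl) (hl2.renaming hρl))

end Splice

section Interpolants

variable {tyof : C → Ty B} {Γ Γs Γt : List (Ty B)}

/-- Statement (1) for the normal form `t`. -/
def Interpolant (tyof : C → Ty B) (s : Splits Γ Γs Γt) (t : Tm C) (T : Ty B) : Prop :=
  ∃ (M : Ty B) (l r : Tm C),
    HasType tyof Γs l M ∧ HasType tyof (M :: Γt) r T ∧
    Conv tyof Γ (splice s.renS s.renT l r) t T ∧
    ∀ p : Bool, voc p M ⊆ vocCtx p Γs ∩ (vocCtx (!p) Γt ∪ voc p T)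

/-- Case (b) of statement (2) for the neutral `t`; case (a) is this predicate for `s.flip`. -/
def NeutralInterpolant (tyof : C → Ty B) (s : Splits Γ Γs Γt) (t : Tm C) (T : Ty B) : Prop :=
  (∀ p : Bool, voc p T ⊆ vocCtx p Γt) ∧
  ∃ (M : Ty B) (l r : Tm C),
    HasType tyof Γs l M ∧ HasType tyof (M :: Γt) r T ∧
    Conv tyof Γ (splice s.renS s.renT l r) t T ∧
    ∀ p : Bool, voc p M ⊆ vocCtx p Γs ∩ vocCtx (!p) Γt

theorem Interpolant.star (s : Splits Γ Γs Γt) : Interpolant tyof s (.star : Tm C) .unit :=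
  ⟨.unit, .star, .star, .star, .star, .refl .star, fun p => by simp [voc]⟩

theorem Interpolant.pair {s : Splits Γ Γs Γt} {t u : Tm C} {A A' : Ty B}
    (ht : Interpolant tyof s t A) (hu : Interpolant tyof s u A') :
    Interpolant tyof s (.pair t u) (.prod A A') := by
  obtain ⟨M1, l1, r1, hl1, hr1, hc1, hv1⟩ := ht
  obtain ⟨M2, l2, r2, hl2, hr2, hc2, hv2⟩ := hu
  refine ⟨.prod M1 M2, .pair l1 l2,
    .pair (substHead (.proj1 (.var 0)) r1) (substHead (.proj2 (.var 0)) r2), .pair hl1 hl2,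
    .pair (hasType_substHead (.proj1 (.var rfl)) hr1) (hasType_substHead (.proj2 (.var rfl)) hr2),
    .pair ((conv_splice_pair_fst s.isRen_renS s.isRen_renT hl1 hl2 hr1).trans hc1)
      ((conv_splice_pair_snd s.isRen_renS s.isRen_renT hl1 hl2 hr2).trans hc2), ?_⟩
  simp only [voc, Set.subset_def, Set.mem_union, Set.mem_inter_iff] at hv1 hv2 ⊢
  grind

theorem Interpolant.lam {s : Splits Γ Γs Γt} {t : Tm C} {A A' : Ty B}
    (ht : Interpolant tyof (s.right A) t A') : Interpolant tyof s (.lam t) (.arr A A') := by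
  obtain ⟨M, l, r, hl, hr, hc, hv⟩ := ht
  refine ⟨M, l, .lam (rename swap01 r), hl, .lam (hr.renaming (IsRen.swap01 _ _ _)), ?_, ?_⟩
  · rw [splice_lam_swap01, ← s.renS_right A, ← s.renT_right A]
    exact .lam hc
  · simp only [voc, vocCtx_cons, Set.subset_def, Set.mem_union, Set.mem_inter_iff] at hv ⊢
    grind

theorem Interpolant.inl {s : Splits Γ Γs Γt} {t : Tm C} {A A' : Ty B}
    (ht : Interpolant tyof s t A) : Interpolant tyof s (.inl t) (.sum A A') := by
  obtain ⟨M, l, r, hl, hr, hc, hv⟩ := ht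
  refine ⟨M, l, .inl r, hl, .inl hr, .inl hc, ?_⟩
  simp only [voc, Set.subset_def, Set.mem_union, Set.mem_inter_iff] at hv ⊢
  grind

theorem Interpolant.inr {s : Splits Γ Γs Γt} {t : Tm C} {A A' : Ty B}
    (ht : Interpolant tyof s t A') : Interpolant tyof s (.inr t) (.sum A A') := by
  obtain ⟨M, l, r, hl, hr, hc, hv⟩ := ht
  refine ⟨M, l, .inr r, hl, .inr hr, .inr hc, ?_⟩
  simp only [voc, Set.subset_def, Set.mem_union, Set.mem_inter_iff] at hv ⊢
  grind

theorem Interpolant.of_neutral {s : Splits Γ Γs Γt} {t : Tm C} {T : Ty B}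
    (h : NeutralInterpolant tyof s.flip t T ∨ NeutralInterpolant tyof s t T) :
    Interpolant tyof s t T := by
  rcases h with ⟨hT, M, l, r, hl, hr, hc, hv⟩ | ⟨-, M, l, r, hl, hr, hc, hv⟩
  · rw [s.renS_flip, s.renT_flip] at hc
    refine ⟨.arr M T, .lam r, .app (.var 0) (rename Nat.succ l), .lam hr,
      .app (.var rfl) (hl.weaken _), ?_, ?_⟩
    · have hβ := Conv.beta_app (hr.renaming (s.isRen_renS.lift M)) (hl.renaming s.isRen_renT)
      rw [← splice_eq_subst_sub0] at hβ
      rw [splice_app_var_zero]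
      exact hβ.trans hc
    · simp only [voc, Set.subset_def, Set.mem_union, Set.mem_inter_iff] at hT hv ⊢
      grind
  · exact ⟨M, l, r, hl, hr, hc, fun p => (hv p).trans (Set.inter_subset_inter_right _
      Set.subset_union_left)⟩

theorem Interpolant.raise {s : Splits Γ Γs Γt} {t : Tm C} {A : Ty B}
    (h : NeutralInterpolant tyof s.flip t .empty ∨ NeutralInterpolant tyof s t .empty) :
    Interpolant tyof s (.raise t) A := by
  obtain ⟨M, l, r, hl, hr, hc, hv⟩ := Interpolant.of_neutral h
  refine ⟨M, l, .raise r, hl, .raise hr, .raise hc, ?_⟩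
  simp only [voc, Set.subset_def, Set.mem_union, Set.mem_inter_iff] at hv ⊢
  grind

theorem NeutralInterpolant.var (s : Splits Γ Γs Γt) {n : Nat} {A : Ty B} (h : Γ[n]? = some A) :
    NeutralInterpolant tyof s.flip (.var n : Tm C) A ∨ NeutralInterpolant tyof s (.var n) A := by
  have hunit (Γl Γr : List (Ty B)) (p : Bool) :
      voc p (.unit : Ty B) ⊆ vocCtx p Γl ∩ vocCtx (!p) Γr := by
    simp [voc]
  rcases s.var_cases h with ⟨m, hm, rfl⟩ | ⟨m, hm, rfl⟩
  · refine .inl ⟨voc_subset_vocCtx hm, .unit, .star, .var (m + 1), .star, .var hm, ?_, hunit _ _⟩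
    rw [splice_eq_subst, s.renT_flip]
    exact .refl (.var h)
  · exact .inr ⟨voc_subset_vocCtx hm, .unit, .star, .var (m + 1), .star, .var hm, .refl (.var h),
      hunit _ _⟩

theorem NeutralInterpolant.proj1 {s : Splits Γ Γs Γt} {t : Tm C} {A A' : Ty B}
    (h : NeutralInterpolant tyof s t (.prod A A')) : NeutralInterpolant tyof s (.proj1 t) A := by
  obtain ⟨hT, M, l, r, hl, hr, hc, hv⟩ := h
  exact ⟨fun p => subset_trans Set.subset_union_left (hT p), M, l, .proj1 r, hl, .proj1 hr,
    .proj1 hc, hv⟩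

theorem NeutralInterpolant.proj2 {s : Splits Γ Γs Γt} {t : Tm C} {A A' : Ty B}
    (h : NeutralInterpolant tyof s t (.prod A A')) : NeutralInterpolant tyof s (.proj2 t) A' := by
  obtain ⟨hT, M, l, r, hl, hr, hc, hv⟩ := h
  exact ⟨fun p => subset_trans Set.subset_union_right (hT p), M, l, .proj2 r, hl, .proj2 hr,
    .proj2 hc, hv⟩

theorem NeutralInterpolant.app {s : Splits Γ Γs Γt} {t u : Tm C} {A A' : Ty B}
    (ht : NeutralInterpolant tyof s t (.arr A A')) (hu : Interpolant tyof s u A) :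
    NeutralInterpolant tyof s (.app t u) A' := by
  obtain ⟨hT, M1, l1, r1, hl1, hr1, hc1, hv1⟩ := ht
  obtain ⟨M2, l2, r2, hl2, hr2, hc2, hv2⟩ := hu
  refine ⟨fun p => subset_trans Set.subset_union_right (hT p), .prod M1 M2, .pair l1 l2,
    .app (substHead (.proj1 (.var 0)) r1) (substHead (.proj2 (.var 0)) r2), .pair hl1 hl2,
    .app (hasType_substHead (.proj1 (.var rfl)) hr1) (hasType_substHead (.proj2 (.var rfl)) hr2),
    .app ((conv_splice_pair_fst s.isRen_renS s.isRen_renT hl1 hl2 hr1).trans hc1)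
      ((conv_splice_pair_snd s.isRen_renS s.isRen_renT hl1 hl2 hr2).trans hc2), ?_⟩
  simp only [voc, Set.subset_def, Set.mem_union, Set.mem_inter_iff] at hT hv1 hv2 ⊢
  grind

theorem Interpolant.case_right {s : Splits Γ Γs Γt} {s0 bl br : Tm C} {A A' T : Ty B}
    (h0 : NeutralInterpolant tyof s s0 (.sum A A'))
    (h1 : Interpolant tyof (s.right A) bl T) (h2 : Interpolant tyof (s.right A') br T) :
    Interpolant tyof s (.case s0 bl br) T := by
  obtain ⟨hT0, M0, l0, r0, hl0, hr0, hc0, hv0⟩ := h0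
  obtain ⟨M1, l1, r1, hl1, hr1, hc1, hv1⟩ := h1
  obtain ⟨M2, l2, r2, hl2, hr2, hc2, hv2⟩ := h2
  have hp1 := hasType_substHead (.proj1 (A' := M2) (.var (n := 0) rfl)) hr1
  have hp2 := hasType_substHead (.proj2 (A := M1) (.var (n := 0) rfl)) hr2
  refine ⟨.prod M0 (.prod M1 M2), .pair l0 (.pair l1 l2),
    .case (substHead (.proj1 (.var 0)) r0)
      (rename swap01 (substHead (.proj2 (.var 0)) (substHead (.proj1 (.var 0)) r1)))
      (rename swap01 (substHead (.proj2 (.var 0)) (substHead (.proj2 (.var 0)) r2))),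
    .pair hl0 (.pair hl1 hl2), ?_, ?_, ?_⟩
  · exact .case (hasType_substHead (.proj1 (.var rfl)) hr0)
      ((hasType_substHead (.proj2 (.var rfl)) hp1).renaming (IsRen.swap01 _ _ _))
      ((hasType_substHead (.proj2 (.var rfl)) hp2).renaming (IsRen.swap01 _ _ _))
  · rw [splice_case_swap01, ← s.renS_right A, ← s.renT_right A]
    have hl12 : HasType tyof Γs (.pair l1 l2) (.prod M1 M2) := .pair hl1 hl2
    refine .case ((conv_splice_pair_fst s.isRen_renS s.isRen_renT hl0 hl12 hr0).trans hc0)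
      (.trans ?_ hc1) (.trans ?_ hc2)
    · have hS := (s.right A).isRen_renS
      have hT := (s.right A).isRen_renT
      exact (conv_splice_pair_snd hS hT hl0 hl12 hp1).trans
        (conv_splice_pair_fst hS hT hl1 hl2 hr1)
    · have hS := (s.right A').isRen_renS
      have hT := (s.right A').isRen_renT
      exact (conv_splice_pair_snd hS hT hl0 hl12 hp2).trans
        (conv_splice_pair_snd hS hT hl1 hl2 hr2)
  · simp only [voc, vocCtx_cons, Set.subset_def, Set.mem_union, Set.mem_inter_iff]
      at hT0 hv0 hv1 hv2 ⊢
    grind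

theorem Interpolant.case_left {s : Splits Γ Γs Γt} {s0 bl br : Tm C} {A A' T : Ty B}
    (h0 : NeutralInterpolant tyof s.flip s0 (.sum A A'))
    (h1 : Interpolant tyof (s.left A) bl T) (h2 : Interpolant tyof (s.left A') br T) :
    Interpolant tyof s (.case s0 bl br) T := by
  obtain ⟨hT0, M0, l0, r0, hl0, hr0, hc0, hv0⟩ := h0
  obtain ⟨M1, l1, r1, hl1, hr1, hc1, hv1⟩ := h1
  obtain ⟨M2, l2, r2, hl2, hr2, hc2, hv2⟩ := h2
  rw [s.renS_flip, s.renT_flip] at hc0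
  rw [s.renS_left] at hc1 hc2
  set body : Tm C := .case r0 (rename (liftRen Nat.succ) (.inl l1))
    (rename (liftRen Nat.succ) (.inr l2))
  have hbody : HasType tyof (M0 :: Γs) body (.sum M1 M2) :=
    .case hr0 (HasType.inl hl1 |>.weaken_lift _) (HasType.inr hl2 |>.weaken_lift _)
  have hS : HasType tyof Γ (splice s.renT s.renS l0 r0) (.sum A A') :=
    hasType_splice s.isRen_renT s.isRen_renS hl0 hr0
  have hN {X : Ty B} {r : Tm C} (hr : HasType tyof (X :: Γt) r T) :
      HasType tyof (X :: Γ) (rename (liftRen s.renT) r) T :=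
    hr.renaming (s.isRen_renT.lift X)
  refine ⟨.arr M0 (.sum M1 M2), .lam body,
    .case (.app (.var 0) (rename Nat.succ l0)) (rename (liftRen Nat.succ) r1)
      (rename (liftRen Nat.succ) r2),
    .lam hbody, .case (.app (.var rfl) (hl0.weaken _)) (hr1.weaken_lift _) (hr2.weaken_lift _),
    ?_, ?_⟩
  · have hA1 : HasType tyof (A :: Γ) (rename (liftRen s.renS) l1) M1 :=
      hl1.renaming (s.isRen_renS.lift A)
    have hA2 : HasType tyof (A' :: Γ) (rename (liftRen s.renS) l2) M2 :=
      hl2.renaming (s.isRen_renS.lift A')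
    have hβ : Conv tyof Γ (.app (rename s.renS (.lam body)) (rename s.renT l0))
        (.case (splice s.renT s.renS l0 r0) (rename (liftRen s.renS) (.inl l1))
          (rename (liftRen s.renS) (.inr l2))) (.sum M1 M2) := by
      rw [← splice_case_weaken, splice_eq_subst_sub0]
      exact .beta_app (hbody.renaming (s.isRen_renS.lift M0)) (hl0.renaming s.isRen_renT)
    have hbranch (ρl ρ : Nat → Nat) (l r : Tm C) :
        subst (sub0 (rename ρl l)) (rename (liftRen Nat.succ) (rename (liftRen ρ) r))
          = splice ρl (Nat.succ ∘ ρ) l r := by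
      rw [splice_eq_subst_sub0, rename_rename, liftRen_comp]
    rw [splice_case_weaken, splice_app_var_zero]
    refine (Conv.case hβ (.refl (hN hr1)) (.refl (hN hr2))).trans ?_
    refine (Conv.case_case_inl_inr hS hA1 hA2 (hN hr1) (hN hr2)).trans ?_
    rw [hbranch, hbranch]
    exact .case hc0 hc1 hc2
  · simp only [voc, vocCtx_cons, Set.subset_def, Set.mem_union, Set.mem_inter_iff]
      at hT0 hv0 hv1 hv2 ⊢
    grind

end Interpolants

mutual
theorem Check.interpolant {Γ : List (Ty B)} {t : Tm Empty} {T : Ty B}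
    (h : Check noCst Γ t T) {Γs Γt : List (Ty B)} (s : Splits Γ Γs Γt) :
    Interpolant noCst s t T :=
  match h with
  | .star => .star s
  | .pair ht hu => (ht.interpolant s).pair (hu.interpolant s)
  | .lam ht => .lam (ht.interpolant _)
  | .inl ht => .inl (ht.interpolant s)
  | .inr ht => .inr (ht.interpolant s)
  | .demote ht rfl => .of_neutral (ht.interpolant s)
  | .raise ht => .raise (ht.interpolant s)
  | .case h0 h1 h2 =>
      (h0.interpolant s).elim
        (fun h0 => .case_left h0 (h1.interpolant _) (h2.interpolant _))
        (fun h0 => .case_right h0 (h1.interpolant _) (h2.interpolant _))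

theorem Infer.interpolant {Γ : List (Ty B)} {t : Tm Empty} {T : Ty B}
    (h : Infer noCst Γ t T) {Γs Γt : List (Ty B)} (s : Splits Γ Γs Γt) :
    NeutralInterpolant noCst s.flip t T ∨ NeutralInterpolant noCst s t T :=
  match h with
  | .cst _ c => c.elim
  | .var hn => NeutralInterpolant.var s hn
  | .proj1 ht => (ht.interpolant s).imp .proj1 .proj1
  | .proj2 ht => (ht.interpolant s).imp .proj2 .proj2
  | .app ht hu =>
      (ht.interpolant s).imp (·.app (hu.interpolant s.flip)) (·.app (hu.interpolant s))
end

/-- **Interpolation, inductive statement** (constant-free language):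
the statement for normal forms, together with the two-case statement for
neutrals, over a partitioned context `Γ = Γs ⋈ Γt`. -/
theorem interpolation_inductive {B : Type} {Γ Γs Γt : List (Ty B)}
    (s : Splits Γ Γs Γt) :
    (∀ (t : Tm Empty) (T : Ty B), Check noCst Γ t T →
      ∃ (M : Ty B) (l r : Tm Empty),
        HasType noCst Γs l M ∧ HasType noCst (M :: Γt) r T ∧
        Conv noCst Γ (splice s.renS s.renT l r) t T ∧
        ∀ p : Bool, voc p M ⊆ vocCtx p Γs ∩ (vocCtx (!p) Γt ∪ voc p T)) ∧
    (∀ (t : Tm Empty) (T : Ty B), Infer noCst Γ t T →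
      ((∀ p : Bool, voc p T ⊆ vocCtx p Γs) ∧
        ∃ (M : Ty B) (l r : Tm Empty),
          HasType noCst Γt l M ∧ HasType noCst (M :: Γs) r T ∧
          Conv noCst Γ (splice s.renT s.renS l r) t T ∧
          ∀ p : Bool, voc p M ⊆ vocCtx (!p) Γs ∩ vocCtx p Γt) ∨
      ((∀ p : Bool, voc p T ⊆ vocCtx p Γt) ∧
        ∃ (M : Ty B) (l r : Tm Empty),
          HasType noCst Γs l M ∧ HasType noCst (M :: Γt) r T ∧
          Conv noCst Γ (splice s.renS s.renT l r) t T ∧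
          ∀ p : Bool, voc p M ⊆ vocCtx p Γs ∩ vocCtx (!p) Γt)) := by
  refine ⟨fun t T h => h.interpolant s, fun t T h => (h.interpolant s).imp_left ?_⟩
  rintro ⟨hT, M, l, r, hl, hr, hc, hv⟩
  rw [s.renS_flip, s.renT_flip] at hc
  exact ⟨hT, M, l, r, hl, hr, hc, fun p => (hv p).trans (Set.inter_comm _ _).subset⟩

end STLCp
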